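/- Let R̂₀ be a complete discrete valuation ring with uniformizer t and fraction field F₀, containing a subring T ⊆ R̂₀ that is also a complete discrete valuation ring with uniformizer t. Let |·| be the norm on F₀ defined by the t-adic valuation, extended as the maximum norm on affine n-space, and let F₁, F₂ be subfields of F₀ containing T. Assume there are t-adically complete T-submodules V ⊆ F₁ ∩ R̂₀ and W ⊆ F₂ ∩ R̂₀ with V + W = R̂₀, and assume F₁ is t-adically dense in F₀. Let f = (f₁, …, fₙ) : 𝔸ⁿ_{F₀} × 𝔸ⁿ_{F₀} ⇢ 𝔸ⁿ_{F₀} be an F₀-rational map defined on a Zariski open set U ⊆ 𝔸ⁿ_{F₀} × 𝔸ⁿ_{F₀} containing the origin (0,0), such that, in multi-index notation, each fᵢ has a power series expansion fᵢ = T_{1,i}(x) + T_{2,i}(y) + Σ_{|(ν,ρ)|≥2} c_{ν,ρ,i} x^ν y^ρ with coefficients c_{ν,ρ,i} ∈ F₀, where x = (x₁,…,xₙ), y = (y₁,…,yₙ), and T_j = (T_{j,1},…,T_{j,n}) is an automorphism of the F₀-vector space F₀ⁿ for j = 1, 2. Then there is a real number ε > 0 such that for all a ∈ 𝔸ⁿ(F₀)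 with |a| ≤ ε, there exist v ∈ F₁ⁿ and w ∈ F₂ⁿ such that (v, w) ∈ U(F₀) and f(v, w) = a. -/

import Mathlib

/-!
STATEMENT 1: Let R̂₀ be a complete discrete valuation ring with uniformizer t and fraction
field F₀, containing a subring T that is also a complete discrete valuation ring with
uniformizer t.  Let F₁, F₂ be subfields of F₀ containing T, with F₁ t-adically dense in
F₀.  Assume there are t-adically complete T-submodules V ⊆ F₁ ∩ R̂₀ and W ⊆ F₂ ∩ R̂₀ with
V + W = R̂₀.  Let f = (f₁,…,fₙ) : 𝔸ⁿ × 𝔸ⁿ ⇢ 𝔸ⁿ be an F₀-rational map defined on a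
Zariski open set containing the origin (represented as fᵢ = pᵢ/qᵢ with qᵢ(0,0) ≠ 0),
whose expansion at the origin is fᵢ = T_{1,i}(x) + T_{2,i}(y) + (terms of degree ≥ 2),
where T₁, T₂ are automorphisms of the vector space F₀ⁿ.  Then there is ε > 0 such that
every a ∈ 𝔸ⁿ(F₀) with |a| ≤ ε is of the form a = f(v,w) with v ∈ F₁ⁿ, w ∈ F₂ⁿ and (v,w)
in the domain of f.

In the t-adic norm, "|a| ≤ ε for suitable ε > 0" means "a ∈ tᵐ·R̂₀ for a suitable m ∈ ℕ",
which is how we render the conclusion.  The condition on the expansion of f at the origin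
is rendered as: all coefficients of pᵢ − Lᵢ·qᵢ in total degree ≤ 1 vanish, where Lᵢ is
the linear polynomial T_{1,i}(x) + T_{2,i}(y); this is equivalent to f(0,0) = 0 with
linear part T₁ ⊕ T₂ since qᵢ(0,0) ≠ 0.
-/

open MvPolynomial

/-- The linear polynomial `L i = T_{1,i}(x) + T_{2,i}(y)` in the 2n variables
`x₁,…,xₙ,y₁,…,yₙ`, where `T₁, T₂` are linear automorphisms of `F₀ⁿ`. -/
noncomputable def linPart {F0 : Type*} [Field F0] {n : ℕ}
    (T1 T2 : (Fin n → F0) ≃ₗ[F0] (Fin n → F0)) (i : Fin n) :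
    MvPolynomial (Fin n ⊕ Fin n) F0 :=
  (∑ j : Fin n, C (T1 (Pi.single j 1) i) * X (Sum.inl j)) +
  (∑ j : Fin n, C (T2 (Pi.single j 1) i) * X (Sum.inr j))

/-!
Substitute `x = P v`, where `P` is a matrix over `F₁` approximating `T₁⁻¹ T₂` (density of `F₁`),
so that the linear part of `(v, w) ↦ f(P v, w)` is close to `(v, w) ↦ T₂ (v + w)`.  Starting
from `(v, w) = 0`, write the residual `T₂⁻¹ (a - f(P v, w))` as `tʲ r`, split `r = v' + w'` with
`v' ∈ Vⁿ`, `w' ∈ Wⁿ` (using `V + W = R̂₀`) and replace `(v, w)` by `(v, w) + tʲ (v', w')`.  On a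
small enough ball around the origin, the terms of degree `≥ 2` of `f` and the error `P - T₁⁻¹ T₂`
only contribute multiples of `tʲ⁺¹`, so the residual gains a factor `t` at each step.  The
approximations converge in `Vⁿ × Wⁿ` by completeness, and the limit is an exact solution since
`f` is continuous on the ball and `F₀` is `t`-adically separated.
-/

open MvPolynomial Filter
open scoped Matrix

section GradedFiltration

/-! `A k` plays the role of the ball `|x| ≤ |t|ᵏ` of a non-archimedean absolute value:
`SetLike.GradedMonoid A` is submultiplicativity and `Antitone A` the inclusion of balls. -/

variable {K S : Type*} [SetLike S K] {A : ℤ → S}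

section CommRing

variable [CommRing K] [AddSubgroupClass S K] [SetLike.GradedMonoid A]

theorem mul_sub_mul_mem_graded {x x' y y' : K} {b c e : ℤ} (hx' : x' ∈ A b) (hy : y ∈ A c)
    (hxx' : x' - x ∈ A (e + b)) (hyy' : y' - y ∈ A (e + c)) :
    x' * y' - x * y ∈ A (e + (b + c)) := by
  rw [show x' * y' - x * y = x' * (y' - y) + (x' - x) * y by ring]
  refine add_mem ?_ ?_
  · convert SetLike.mul_mem_graded hx' hyy' using 2; ring
  · convert SetLike.mul_mem_graded hxx' hy using 2; ring

theorem prod_sub_prod_mem_graded {ι : Type*} (s : Finset ι) {x x' : ι → K} {c : ι → ℤ} {e : ℤ}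
    (hx : ∀ i, x i ∈ A (c i)) (hx' : ∀ i, x' i ∈ A (c i))
    (hxx' : ∀ i, x' i - x i ∈ A (e + c i)) :
    ∏ i ∈ s, x' i - ∏ i ∈ s, x i ∈ A (e + ∑ i ∈ s, c i) := by
  classical
  induction s using Finset.induction_on with
  | empty => simp [zero_mem]
  | insert a s ha ih =>
    rw [Finset.prod_insert ha, Finset.prod_insert ha, Finset.sum_insert ha]
    exact mul_sub_mul_mem_graded (hx' a) (SetLike.prod_mem_graded A c x fun i _ => hx i)
      (hxx' a) ih

theorem pow_sub_pow_mem_graded {x x' : K} {b e : ℤ} (n : ℕ) (hx : x ∈ A b) (hx' : x' ∈ A b)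
    (hxx' : x' - x ∈ A (e + b)) : x' ^ n - x ^ n ∈ A (e + n * b) := by
  simpa using prod_sub_prod_mem_graded (Finset.range n) (x := fun _ => x) (x' := fun _ => x')
    (c := fun _ => b) (fun _ => hx) (fun _ => hx') (fun _ => hxx')

theorem mulVec_mem_graded {m n : Type*} [Fintype n] {M : Matrix m n K} {x : n → K} {c k : ℤ}
    (hM : ∀ i j, M i j ∈ A c) (hx : ∀ j, x j ∈ A k) (i : m) : (M *ᵥ x) i ∈ A (c + k) :=
  sum_mem fun j _ => SetLike.mul_mem_graded (hM i j) (hx j)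

variable [PartialOrder S] [IsConcreteLE S K] (hA : Antitone A)
include hA

theorem eval_mem_graded {σ : Type*} {P : MvPolynomial σ K} {z : σ → K} {b c : ℤ} {μ : ℕ}
    (hb : 0 ≤ b) (hP : ∀ d, coeff d P ∈ A c) (hμ : ∀ d : σ →₀ ℕ, d.degree < μ → coeff d P = 0)
    (hz : ∀ i, z i ∈ A b) : eval z P ∈ A (c + μ * b) := by
  rw [eval_eq]
  refine sum_mem fun d _ => ?_
  by_cases hd : d.degree < μ
  · simp [hμ d hd, zero_mem]
  · have hmon := SetLike.prod_pow_mem_graded A (fun _ => b) z (F := d.support) d fun i _ => hz i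
    refine SetLike.le_def.1 (hA ?_) (SetLike.mul_mem_graded (hP d) hmon)
    rw [← Finset.sum_smul, ← Finsupp.degree_apply, nsmul_eq_mul]
    have : (μ : ℤ) ≤ d.degree := by exact_mod_cast not_lt.mp hd
    nlinarith

theorem eval_sub_eval_mem_graded {σ : Type*} {P : MvPolynomial σ K} {z z' : σ → K}
    {b c e : ℤ} {μ : ℕ} (hb : 0 ≤ b) (hP : ∀ d, coeff d P ∈ A c)
    (hμ : ∀ d : σ →₀ ℕ, d.degree < μ → coeff d P = 0) (hz : ∀ i, z i ∈ A b)
    (hz' : ∀ i, z' i ∈ A b) (hzz' : ∀ i, z' i - z i ∈ A (e + b)) :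
    eval z' P - eval z P ∈ A (c + (e + μ * b)) := by
  rw [eval_eq, eval_eq, ← Finset.sum_sub_distrib]
  refine sum_mem fun d _ => ?_
  rw [← mul_sub]
  by_cases hd : d.degree < μ
  · simp [hμ d hd, zero_mem]
  · have hmon := prod_sub_prod_mem_graded d.support (c := fun i => d i * b)
      (fun i => SetLike.pow_mem_graded (d i) (hz i))
      (fun i => SetLike.pow_mem_graded (d i) (hz' i))
      (fun i => pow_sub_pow_mem_graded (d i) (hz i) (hz' i) (hzz' i))
    refine SetLike.le_def.1 (hA ?_) (SetLike.mul_mem_graded (hP d) hmon)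
    simp only [← Finset.sum_mul, ← Nat.cast_sum, ← Finsupp.degree_apply]
    have : (μ : ℤ) ≤ d.degree := by exact_mod_cast not_lt.mp hd
    nlinarith

end CommRing

section Field

variable [Field K] [AddSubgroupClass S K] [SetLike.GradedMonoid A] [PartialOrder S]
  [IsConcreteLE S K] (hA : Antitone A)
include hA

theorem div_sub_div_mem_graded {σ : Type*} {g q : MvPolynomial σ K} {z z' : σ → K}
    {b c c' e : ℤ} {μ : ℕ} (hb : 0 ≤ b) (hg : ∀ d, coeff d g ∈ A c) (hq : ∀ d, coeff d q ∈ A c)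
    (hμ : ∀ d : σ →₀ ℕ, d.degree < μ → coeff d g = 0)
    (hz : ∀ i, z i ∈ A b) (hz' : ∀ i, z' i ∈ A b) (hzz' : ∀ i, z' i - z i ∈ A (e + b))
    (hqz : eval z q ≠ 0) (hqz' : eval z' q ≠ 0)
    (hqz_inv : (eval z q)⁻¹ ∈ A c') (hqz'_inv : (eval z' q)⁻¹ ∈ A c') :
    eval z' g / eval z' q - eval z g / eval z q ∈ A (2 * c + 2 * c' + (e + μ * b)) := by
  have hq0 : ∀ d : σ →₀ ℕ, d.degree < 0 → coeff d q = 0 := fun d h => absurd h d.degree.not_lt_zero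
  have h1 := SetLike.mul_mem_graded (eval_sub_eval_mem_graded hA hb hg hμ hz hz' hzz')
    (eval_mem_graded hA hb hq hq0 hz)
  have h2 := SetLike.mul_mem_graded (eval_mem_graded hA hb hg hμ hz)
    (eval_sub_eval_mem_graded hA hb hq hq0 hz hz' hzz')
  rw [show eval z' g / eval z' q - eval z g / eval z q
      = ((eval z' g - eval z g) * eval z q - eval z g * (eval z' q - eval z q))
        * ((eval z' q)⁻¹ * (eval z q)⁻¹) by field_simp; ring]
  convert SetLike.mul_mem_graded (sub_mem h1 (by convert h2 using 2; ring))
    (SetLike.mul_mem_graded hqz'_inv hqz_inv) using 2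
  push_cast; ring

theorem div_sub_div_sub_sub_mem_graded {σ : Type*} {p q l : MvPolynomial σ K} {z z' : σ → K}
    {b c c' e : ℤ} (hb : 0 ≤ b) (hpl : ∀ d : σ →₀ ℕ, d.degree < 2 → coeff d (p - l * q) = 0)
    (hg : ∀ d, coeff d (p - l * q) ∈ A c) (hq : ∀ d, coeff d q ∈ A c)
    (hz : ∀ i, z i ∈ A b) (hz' : ∀ i, z' i ∈ A b) (hzz' : ∀ i, z' i - z i ∈ A (e + b))
    (hqz : eval z q ≠ 0) (hqz' : eval z' q ≠ 0)
    (hqz_inv : (eval z q)⁻¹ ∈ A c') (hqz'_inv : (eval z' q)⁻¹ ∈ A c') :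
    eval z' p / eval z' q - eval z p / eval z q - (eval z' l - eval z l)
      ∈ A (2 * c + 2 * c' + (e + 2 * b)) := by
  have key : ∀ y, eval y q ≠ 0 →
      eval y p / eval y q = eval y l + eval y (p - l * q) / eval y q := fun y hy => by
    rw [map_sub, map_mul]; field_simp; ring
  rw [key z hqz, key z' hqz']
  convert div_sub_div_mem_graded hA hb hg hq hpl hz hz' hzz' hqz hqz' hqz_inv hqz'_inv using 1
  · norm_num
  · ring

end Field

end GradedFiltration

section AdicFiltration

variable {R : Type*} (K : Type*) [CommRing R] [Field K] [Algebra R K]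

/-- The ball `|x| ≤ |t|ᵏ` of the `t`-adic absolute value, as the `R`-submodule `tᵏ R` of `K`. -/
def adicFiltration (t : R) (k : ℤ) : Submodule R K := R ∙ algebraMap R K t ^ k

variable {K} {t : R}

theorem mem_adicFiltration {k : ℤ} {x : K} :
    x ∈ adicFiltration K t k ↔ ∃ r : R, algebraMap R K r * algebraMap R K t ^ k = x := by
  simp [adicFiltration, Submodule.mem_span_singleton, Algebra.smul_def]

theorem mem_adicFiltration_natCast {k : ℕ} {x : K} :
    x ∈ adicFiltration K t k ↔ ∃ r : R, x = algebraMap R K (t ^ k * r) := by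
  simp [mem_adicFiltration, eq_comm, mul_comm]

theorem algebraMap_mem_adicFiltration_of_dvd {k : ℕ} {x : R} (h : t ^ k ∣ x) :
    algebraMap R K x ∈ adicFiltration K t k := by
  obtain ⟨r, rfl⟩ := h
  exact mem_adicFiltration_natCast.2 ⟨r, rfl⟩

variable [IsFractionRing R K]

theorem adicFiltration_gradedMonoid (ht : t ≠ 0) : SetLike.GradedMonoid (adicFiltration K t) where
  one_mem := mem_adicFiltration.2 ⟨1, by simp⟩
  mul_mem k l x y hx hy := by
    obtain ⟨r, rfl⟩ := mem_adicFiltration.1 hx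
    obtain ⟨s, rfl⟩ := mem_adicFiltration.1 hy
    refine mem_adicFiltration.2 ⟨r * s, ?_⟩
    rw [zpow_add₀ (IsFractionRing.to_map_eq_zero_iff.not.2 ht), map_mul]
    ring

theorem adicFiltration_antitone (ht : t ≠ 0) : Antitone (adicFiltration K t) := by
  intro k l hkl
  refine (Submodule.span_singleton_le_iff_mem _ _).2 (mem_adicFiltration.2 ⟨t ^ (l - k).toNat, ?_⟩)
  rw [map_pow, ← zpow_natCast, Int.toNat_of_nonneg (sub_nonneg.2 hkl),
    ← zpow_add₀ (IsFractionRing.to_map_eq_zero_iff.not.2 ht), sub_add_cancel]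

variable (ht : Irreducible t)
include ht

theorem unit_smul_zpow_mem_adicFiltration_iff (u : Rˣ) {k v : ℤ} :
    u • algebraMap R K t ^ v ∈ adicFiltration K t k ↔ k ≤ v := by
  have hτ : algebraMap R K t ≠ 0 := IsFractionRing.to_map_eq_zero_iff.not.2 ht.ne_zero
  refine ⟨fun h => ?_, fun h => adicFiltration_antitone ht.ne_zero h
    (Submodule.smul_mem _ _ (Submodule.mem_span_singleton_self _))⟩
  by_contra! hvk
  obtain ⟨r, hr⟩ := mem_adicFiltration.1 h
  have : (u : R) = r * t ^ (k - v).toNat := by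
    refine IsFractionRing.injective R K ?_
    rw [Units.smul_def, Algebra.smul_def] at hr
    rw [map_mul, map_pow, ← zpow_natCast, Int.toNat_of_nonneg (by omega), zpow_sub₀ hτ,
      mul_div_assoc', hr, mul_div_cancel_right₀ _ (zpow_ne_zero _ hτ)]
  refine ht.not_isUnit (isUnit_of_dvd_unit ?_ u.isUnit)
  rw [this]
  exact dvd_mul_of_dvd_right (dvd_pow_self t (by omega)) r

variable [IsDomain R] [IsDiscreteValuationRing R]

theorem eq_zero_of_forall_mem_adicFiltration {x : K} (hx : ∀ k, x ∈ adicFiltration K t k) :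
    x = 0 := by
  by_contra h
  obtain ⟨v, u, rfl⟩ := IsDiscreteValuationRing.exists_units_eq_smul_zpow_of_irreducible ht h
  have := (unit_smul_zpow_mem_adicFiltration_iff ht u).1 (hx (v + 1))
  omega

theorem eventually_atBot_mem_adicFiltration (x : K) : ∀ᶠ k in atBot, x ∈ adicFiltration K t k := by
  rcases eq_or_ne x 0 with rfl | h
  · exact Eventually.of_forall fun _ => zero_mem _
  obtain ⟨v, u, rfl⟩ := IsDiscreteValuationRing.exists_units_eq_smul_zpow_of_irreducible ht h
  filter_upwards [eventually_le_atBot v] with k hk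
    using (unit_smul_zpow_mem_adicFiltration_iff ht u).2 hk

theorem inv_mem_adicFiltration_of_notMem {x : K} {c : ℤ} (hx : x ∉ adicFiltration K t (c + 1)) :
    x⁻¹ ∈ adicFiltration K t (-c) := by
  have h : x ≠ 0 := by rintro rfl; exact hx (zero_mem _)
  obtain ⟨v, u, rfl⟩ := IsDiscreteValuationRing.exists_units_eq_smul_zpow_of_irreducible ht h
  have hv : v ≤ c := by
    by_contra! hcv
    exact hx ((unit_smul_zpow_mem_adicFiltration_iff ht u).2 (by omega))
  have : (u • algebraMap R K t ^ v)⁻¹ = u⁻¹ • algebraMap R K t ^ (-v) := by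
    simp only [Units.smul_def, Algebra.smul_def, mul_inv, zpow_neg, map_units_inv]
  rw [this]
  exact (unit_smul_zpow_mem_adicFiltration_iff ht _).2 (by omega)

theorem eventually_atBot_forall_coeff_mem {σ : Type*} (P : MvPolynomial σ K) :
    ∀ᶠ k in atBot, ∀ d, coeff d P ∈ adicFiltration K t k := by
  filter_upwards [(eventually_all_finset P.support).2
    fun d _ => eventually_atBot_mem_adicFiltration ht (coeff d P)] with k hk d
  by_cases hd : d ∈ P.support
  · exact hk d hd
  · rw [notMem_support_iff.1 hd]
    exact zero_mem _

theorem eventually_atBot_eventually_atTop_eval_inv_mem {σ : Type*} {q : MvPolynomial σ K}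
    (hq : eval (fun _ => 0) q ≠ 0) :
    ∀ᶠ c in atBot, ∀ᶠ b in atTop, ∀ z : σ → K, (∀ i, z i ∈ adicFiltration K t b) →
      eval z q ≠ 0 ∧ (eval z q)⁻¹ ∈ adicFiltration K t c := by
  have := adicFiltration_gradedMonoid (K := K) ht.ne_zero
  have hA := adicFiltration_antitone (K := K) ht.ne_zero
  obtain ⟨k, hk⟩ : ∃ k, eval (fun _ => 0) q ∉ adicFiltration K t k := by
    by_contra! h
    exact hq (eq_zero_of_forall_mem_adicFiltration ht h)
  obtain ⟨cq, hcq⟩ := (eventually_atBot_forall_coeff_mem ht q).exists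
  -- on a small ball `q(z) ≡ q(0)` modulo `tᵏ`, so `q(z)` has the valuation of `q(0)`
  filter_upwards [eventually_le_atBot (1 - k)] with c hc
  filter_upwards [eventually_ge_atTop (max 0 (k - cq))] with b hb z hz
  have hdiff : eval z q - eval (fun _ => 0) q ∈ adicFiltration K t k := by
    refine hA ?_ (eval_sub_eval_mem_graded hA (b := 0) (e := b) (μ := 0) le_rfl hcq
      (fun d hd => absurd hd d.degree.not_lt_zero) (fun _ => zero_mem _)
      (fun i => hA (by omega) (hz i)) (fun i => by simpa using hz i))
    omega
  have hnot : eval z q ∉ adicFiltration K t (k - 1 + 1) := fun h => by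
    have := sub_mem (sub_add_cancel k 1 ▸ h) hdiff
    exact hk (by rwa [sub_sub_cancel] at this)
  exact ⟨fun h => hnot (h ▸ zero_mem _), hA (by omega) (inv_mem_adicFiltration_of_notMem ht hnot)⟩

theorem eventually_atBot_forall_mulVec_mem {m n : Type*} [Finite m] [Fintype n]
    (M : Matrix m n K) : ∀ᶠ c in atBot, ∀ (k : ℤ) (x : n → K),
      (∀ j, x j ∈ adicFiltration K t k) → ∀ i, (M *ᵥ x) i ∈ adicFiltration K t (c + k) := by
  have := adicFiltration_gradedMonoid (K := K) ht.ne_zero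
  filter_upwards [eventually_all.2 fun i => eventually_all.2 fun j =>
    eventually_atBot_mem_adicFiltration ht (M i j)] with c hc k x hx
    using mulVec_mem_graded hc hx

end AdicFiltration

section Iteration

variable {R : Type*} [CommRing R]

def IsAdicCompleteSubgroup (t : R) (V : AddSubgroup R) : Prop :=
  ∀ s : ℕ → R, (∀ n, s n ∈ V) → (∀ n, ∃ r ∈ V, s (n + 1) - s n = t ^ n * r) →
    ∃ l ∈ V, ∀ n, ∃ r ∈ V, l - s n = t ^ n * r

theorem pow_mul_mem_of_forall_mul_mem {t : R} {V : AddSubgroup R} (htV : ∀ x ∈ V, t * x ∈ V)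
    (k : ℕ) {x : R} (hx : x ∈ V) : t ^ k * x ∈ V := by
  induction k with
  | zero => simpa using hx
  | succ k ih => simpa [pow_succ', mul_assoc] using htV _ ih

theorem IsAdicCompleteSubgroup.exists_dvd_sub {t : R} {V : AddSubgroup R}
    (hV : IsAdicCompleteSubgroup t V) (htV : ∀ x ∈ V, t * x ∈ V) {s : ℕ → R} {j₀ : ℕ}
    (hs : ∀ n, s n ∈ V) (hsucc : ∀ n, ∃ r ∈ V, s (n + 1) - s n = t ^ (j₀ + n) * r) :
    ∃ l ∈ V, ∀ n, t ^ n ∣ l - s n := by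
  obtain ⟨l, hl, hls⟩ := hV s hs fun n => by
    obtain ⟨r, hr, hsr⟩ := hsucc n
    exact ⟨t ^ j₀ * r, pow_mul_mem_of_forall_mul_mem htV j₀ hr,
      by rw [hsr, pow_add, mul_comm (t ^ j₀), mul_assoc]⟩
  refine ⟨l, hl, fun n => ?_⟩
  obtain ⟨r, -, hr⟩ := hls n
  exact ⟨r, hr⟩

theorem exists_seq_of_forall_exists {α : Type*} {P : ℕ → α → Prop} {Q : ℕ → α → α → Prop}
    {x₀ : α} (h₀ : P 0 x₀) (h : ∀ j x, P j x → ∃ y, P (j + 1) y ∧ Q j x y) :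
    ∃ x : ℕ → α, x 0 = x₀ ∧ ∀ j, P j (x j) ∧ Q j (x j) (x (j + 1)) := by
  choose! f hfP hfQ using h
  let x : ℕ → α := fun j => Nat.rec x₀ (fun j y => f j y) j
  have hx : ∀ j, P j (x j) := fun j => by
    induction j with
    | zero => exact h₀
    | succ j ih => exact hfP j _ ih
  exact ⟨x, rfl, fun j => ⟨hx j, hfQ j _ (hx j)⟩⟩

variable {K : Type*} [Field K] [Algebra R K] [IsFractionRing R K]

theorem exists_eq_zero_of_improving_step [IsDomain R] [IsDiscreteValuationRing R] {ι κ : Type*}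
    {t : R} (ht : Irreducible t) {U : ι → AddSubgroup R}
    (hU : ∀ i, IsAdicCompleteSubgroup t (U i)) (htU : ∀ i, ∀ x ∈ U i, t * x ∈ U i)
    {E : (ι → R) → κ → K} {j₀ : ℕ} {C : ℤ} (hE₀ : ∀ i, E 0 i ∈ adicFiltration K t j₀)
    (hstep : ∀ j : ℕ, j₀ ≤ j → ∀ s : ι → R, (∀ i, t ^ j₀ ∣ s i) →
      (∀ i, E s i ∈ adicFiltration K t j) →
      ∃ r : ι → R, (∀ i, r i ∈ U i) ∧ ∀ i, E (s + t ^ j • r) i ∈ adicFiltration K t (j + 1))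
    (hcont : ∀ (j : ℕ) (s s' : ι → R), (∀ i, t ^ j₀ ∣ s i) → (∀ i, t ^ j₀ ∣ s' i) →
      (∀ i, t ^ j ∣ s' i - s i) → ∀ i, E s' i - E s i ∈ adicFiltration K t (C + j)) :
    ∃ s : ι → R, (∀ i, s i ∈ U i) ∧ (∀ i, t ^ j₀ ∣ s i) ∧ E s = 0 := by
  have hA := adicFiltration_antitone (K := K) ht.ne_zero
  obtain ⟨x, hx₀, hx⟩ := exists_seq_of_forall_exists
    (P := fun j s => (∀ i, s i ∈ U i) ∧ (∀ i, t ^ j₀ ∣ s i) ∧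
      ∀ i, E s i ∈ adicFiltration K t ↑(j₀ + j))
    (Q := fun j s s' => ∃ r : ι → R, (∀ i, r i ∈ U i) ∧ s' = s + t ^ (j₀ + j) • r)
    ⟨fun i => zero_mem _, fun i => dvd_zero _, hE₀⟩ fun j s ⟨hsU, hsdvd, hsE⟩ => by
      obtain ⟨r, hrU, hrE⟩ := hstep (j₀ + j) (by omega) s hsdvd hsE
      refine ⟨s + t ^ (j₀ + j) • r, ⟨fun i => add_mem (hsU i) ?_, fun i => ?_, ?_⟩, r, hrU, rfl⟩
      · exact pow_mul_mem_of_forall_mul_mem (htU i) _ (hrU i)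
      · exact dvd_add (hsdvd i) (Dvd.dvd.mul_right (pow_dvd_pow t (by omega)) _)
      · simpa [add_assoc] using hrE
  choose l hlU hl using fun i => (hU i).exists_dvd_sub (htU i) (s := fun j => x j i) (j₀ := j₀)
    (fun j => (hx j).1.1 i) fun j => by
      obtain ⟨r, hrU, hr⟩ := (hx j).2
      exact ⟨r i, hrU i, by simp [hr]⟩
  have hldvd : ∀ i, t ^ j₀ ∣ l i := fun i => by
    simpa using dvd_add (hl i j₀) ((hx j₀).1.2.1 i)
  refine ⟨l, hlU, hldvd, funext fun i => eq_zero_of_forall_mem_adicFiltration ht fun k => ?_⟩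
  obtain ⟨j, hj⟩ : ∃ j : ℕ, k ≤ C + j ∧ k ≤ j := ⟨(k - C).toNat + k.toNat, by omega, by omega⟩
  rw [← sub_add_cancel (E l i) (E (x j) i)]
  exact add_mem (hA hj.1 (hcont j _ _ (hx j).1.2.1 hldvd (fun i => hl i j) i))
    (hA (by omega) ((hx j).1.2.2 i))

end Iteration

section LinPart

variable {K : Type*} [Field K] {n : ℕ} (T1 T2 : (Fin n → K) ≃ₗ[K] (Fin n → K))

theorem eval_linPart (v w : Fin n → K) (i : Fin n) :
    eval (Sum.elim v w) (linPart T1 T2 i) = T1 v i + T2 w i := by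
  have key : ∀ (T : (Fin n → K) ≃ₗ[K] (Fin n → K)) (x : Fin n → K),
      T x i = ∑ j, T (Pi.single j 1) i * x j := fun T x =>
    (congrFun (LinearMap.toMatrix'_mulVec (T : (Fin n → K) →ₗ[K] (Fin n → K)) x) i).symm
  rw [key T1, key T2]
  simp [linPart, mul_comm]

theorem eval_sub_linPart (z z' : Fin n ⊕ Fin n → K) (i : Fin n) :
    eval (z' - z) (linPart T1 T2 i) = eval z' (linPart T1 T2 i) - eval z (linPart T1 T2 i) := by
  simp only [linPart, map_add, map_sum, map_mul, eval_C, eval_X, Pi.sub_apply, mul_sub,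
    Finset.sum_sub_distrib]
  ring

end LinPart

section RationalMap

variable {R K : Type*} [CommRing R] [Field K] [Algebra R K] {n : ℕ}

noncomputable def ratEval {σ κ : Type*} (p q : κ → MvPolynomial σ K) (z : σ → K) : κ → K :=
  fun i => eval z (p i) / eval z (q i)

/-- `s = (v, w) ↦ (P v, w)`: the unknowns `v ∈ Vⁿ` enter `f` through the substitution
`x = P v`, so that `x` lies in `F₁ⁿ` once `P` has entries in `F₁`. -/
noncomputable def substPoint {ι : Type*} [Fintype ι] (P : Matrix ι ι K) :
    (ι ⊕ ι → R) →+ (ι ⊕ ι → K) where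
  toFun s := Sum.elim (P *ᵥ fun i => algebraMap R K (s (.inl i)))
    fun i => algebraMap R K (s (.inr i))
  map_zero' := by ext (i | i) <;> simp [Matrix.mulVec, dotProduct]
  map_add' s s' := by
    ext (i | i) <;> simp [Matrix.mulVec, dotProduct, mul_add, Finset.sum_add_distrib]

@[simp]
theorem substPoint_inl {ι : Type*} [Fintype ι] (P : Matrix ι ι K) (s : ι ⊕ ι → R) (i : ι) :
    substPoint P s (.inl i) = (P *ᵥ fun i => algebraMap R K (s (.inl i))) i :=
  rfl

@[simp]
theorem substPoint_inr {ι : Type*} [Fintype ι] (P : Matrix ι ι K) (s : ι ⊕ ι → R) (i : ι) :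
    substPoint P s (.inr i) = algebraMap R K (s (.inr i)) :=
  rfl

/-- `b` is the radius `|z| ≤ |t|ᵇ` of the ball where the iteration runs, and `c` a common lower
bound for all valuations in sight; `1 - 6c ≤ b` makes the nonlinear error of a step, after
`T₂⁻¹`, one power of `t` smaller than the step. -/
structure SolutionBounds (t : R) (p q : Fin n → MvPolynomial (Fin n ⊕ Fin n) K)
    (T1 T2 : (Fin n → K) ≃ₗ[K] (Fin n → K)) (P : Matrix (Fin n) (Fin n) K) (b c : ℤ) : Prop where
  nonpos : c ≤ 0
  radius : 1 - 6 * c ≤ b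
  coeff_mem : ∀ i d, coeff d (p i) ∈ adicFiltration K t c ∧ coeff d (q i) ∈ adicFiltration K t c ∧
    coeff d (p i - linPart T1 T2 i * q i) ∈ adicFiltration K t c
  mulVec_mem : ∀ (k : ℤ) (x : Fin n → K), (∀ j, x j ∈ adicFiltration K t k) →
    ∀ i, (P *ᵥ x) i ∈ adicFiltration K t (c + k)
  symm_mem : ∀ (k : ℤ) (x : Fin n → K), (∀ j, x j ∈ adicFiltration K t k) →
    ∀ i, T2.symm x i ∈ adicFiltration K t (c + k)
  eval_mem : ∀ z : Fin n ⊕ Fin n → K, (∀ σ, z σ ∈ adicFiltration K t b) →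
    ∀ i, eval z (q i) ≠ 0 ∧ (eval z (q i))⁻¹ ∈ adicFiltration K t c

variable {t : R} {p q : Fin n → MvPolynomial (Fin n ⊕ Fin n) K}
  {T1 T2 : (Fin n → K) ≃ₗ[K] (Fin n → K)} {P : Matrix (Fin n) (Fin n) K}

theorem exists_residual_step {V W : AddSubgroup R} (hVW : ∀ x : R, ∃ v ∈ V, ∃ w ∈ W, x = v + w)
    (hP : ∀ (k : ℤ) (x : Fin n → K), (∀ j, x j ∈ adicFiltration K t k) →
      ∀ i, x i - T2.symm (T1 (P *ᵥ x)) i ∈ adicFiltration K t (k + 1))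
    (a : Fin n → K) {j : ℕ} {s : Fin n ⊕ Fin n → R}
    (hE : ∀ i, T2.symm (a - ratEval p q (substPoint P s)) i ∈ adicFiltration K t j)
    (hNL : ∀ δ : Fin n ⊕ Fin n → R, (∀ i, t ^ j ∣ δ i) →
      ∀ i, T2.symm (ratEval p q (substPoint P (s + δ)) - ratEval p q (substPoint P s) -
        fun i => eval (substPoint P δ) (linPart T1 T2 i)) i ∈ adicFiltration K t (j + 1)) :
    ∃ r : Fin n ⊕ Fin n → R, (∀ i, r i ∈ Sum.elim (fun _ => V) (fun _ => W) i) ∧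
      ∀ i, T2.symm (a - ratEval p q (substPoint P (s + t ^ j • r))) i
        ∈ adicFiltration K t (j + 1) := by
  choose r₀ hr₀ using fun i => mem_adicFiltration_natCast.1 (hE i)
  choose v hv w hw hvw using fun i => hVW (r₀ i)
  set ξ : Fin n → K := fun i => algebraMap R K (t ^ j * v i)
  set ζ : Fin n → K := fun i => algebraMap R K (t ^ j * w i)
  set δ := t ^ j • Sum.elim v w
  have hres : T2.symm (a - ratEval p q (substPoint P s)) = ξ + ζ := by
    funext i
    rw [hr₀ i, hvw i]
    simp [ξ, ζ, mul_add]
  have hlin : (fun i => eval (substPoint P δ) (linPart T1 T2 i)) = T1 (P *ᵥ ξ) + T2 ζ := by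
    have : substPoint P δ = Sum.elim (P *ᵥ ξ) ζ := by ext (i | i) <;> simp [δ, ξ, ζ]
    funext i
    rw [this, eval_linPart]
    rfl
  refine ⟨Sum.elim v w, by rintro (i | i) <;> simp [hv, hw], fun i => ?_⟩
  set D := ratEval p q (substPoint P (s + δ)) - ratEval p q (substPoint P s) -
    fun i => eval (substPoint P δ) (linPart T1 T2 i)
  have key : T2.symm (a - ratEval p q (substPoint P (s + δ)))
      = ξ - T2.symm (T1 (P *ᵥ ξ)) - T2.symm D := by
    have : a - ratEval p q (substPoint P (s + δ))
        = (a - ratEval p q (substPoint P s)) - (T1 (P *ᵥ ξ) + T2 ζ) - D := by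
      rw [← hlin]; simp only [D]; abel
    rw [this, map_sub, map_sub, hres, map_add, LinearEquiv.symm_apply_apply]
    abel
  rw [key, Pi.sub_apply]
  exact sub_mem (hP j ξ (fun i => mem_adicFiltration_natCast.2 ⟨v i, rfl⟩) i)
    (hNL δ (fun i => dvd_mul_right _ _) i)

variable [IsFractionRing R K] {b c : ℤ}

namespace SolutionBounds

variable (hB : SolutionBounds t p q T1 T2 P b c) (ht : t ≠ 0)
include hB ht

theorem substPoint_mem {j : ℕ} {s : Fin n ⊕ Fin n → R} (hs : ∀ i, t ^ j ∣ s i) :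
    ∀ σ, substPoint P s σ ∈ adicFiltration K t (c + j) := by
  rintro (i | i)
  · rw [substPoint_inl]
    exact hB.mulVec_mem j _ (fun i => algebraMap_mem_adicFiltration_of_dvd (hs _)) i
  · rw [substPoint_inr]
    exact adicFiltration_antitone ht (by linarith [hB.nonpos])
      (algebraMap_mem_adicFiltration_of_dvd (hs _))

theorem substPoint_mem_ball {j₀ : ℕ} (hj₀ : b ≤ c + j₀) {s : Fin n ⊕ Fin n → R}
    (hs : ∀ i, t ^ j₀ ∣ s i) (σ : Fin n ⊕ Fin n) : substPoint P s σ ∈ adicFiltration K t b :=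
  adicFiltration_antitone ht hj₀ (hB.substPoint_mem ht hs σ)

theorem residual_sub_mem {j₀ : ℕ} (hj₀ : b ≤ c + j₀) (a : Fin n → K) {j : ℕ}
    {s s' : Fin n ⊕ Fin n → R} (hs : ∀ i, t ^ j₀ ∣ s i) (hs' : ∀ i, t ^ j₀ ∣ s' i)
    (hss' : ∀ i, t ^ j ∣ s' i - s i) (i : Fin n) :
    T2.symm (a - ratEval p q (substPoint P s')) i - T2.symm (a - ratEval p q (substPoint P s)) i
      ∈ adicFiltration K t (6 * c - b + j) := by
  have := adicFiltration_gradedMonoid (K := K) ht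
  have hA := adicFiltration_antitone (K := K) ht
  have hdiff : ∀ σ, substPoint P s σ - substPoint P s' σ ∈ adicFiltration K t (c + j - b + b) := by
    intro σ
    rw [sub_add_cancel, ← Pi.sub_apply, ← map_sub]
    exact hB.substPoint_mem ht (fun i => by simpa using (hss' i).neg_right) σ
  have hf : ∀ i, ratEval p q (substPoint P s) i - ratEval p q (substPoint P s') i
      ∈ adicFiltration K t (2 * c + 2 * c + (c + j - b + (0 : ℕ) * b)) := fun i => by
    have hq := hB.eval_mem _ (hB.substPoint_mem_ball ht hj₀ hs) i
    have hq' := hB.eval_mem _ (hB.substPoint_mem_ball ht hj₀ hs') i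
    exact div_sub_div_mem_graded hA (μ := 0) (by linarith [hB.radius, hB.nonpos])
      (fun d => (hB.coeff_mem i d).1) (fun d => (hB.coeff_mem i d).2.1)
      (fun d hd => absurd hd d.degree.not_lt_zero) (hB.substPoint_mem_ball ht hj₀ hs')
      (hB.substPoint_mem_ball ht hj₀ hs) hdiff
      hq'.1 hq.1 hq'.2 hq.2
  rw [← Pi.sub_apply, ← map_sub, sub_sub_sub_cancel_left]
  exact hA (by push_cast; linarith) (hB.symm_mem _ _ hf i)

theorem nonlinear_mem
    (hlin : ∀ i, ∀ d : (Fin n ⊕ Fin n) →₀ ℕ, (d.sum fun _ e => e) ≤ 1 →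
      coeff d (p i - linPart T1 T2 i * q i) = 0)
    {j₀ : ℕ} (hj₀ : b ≤ c + j₀) {j : ℕ} (hj : j₀ ≤ j) {s δ : Fin n ⊕ Fin n → R}
    (hs : ∀ i, t ^ j₀ ∣ s i) (hδ : ∀ i, t ^ j ∣ δ i) (i : Fin n) :
    T2.symm (ratEval p q (substPoint P (s + δ)) - ratEval p q (substPoint P s) -
      fun i => eval (substPoint P δ) (linPart T1 T2 i)) i ∈ adicFiltration K t (j + 1) := by
  have := adicFiltration_gradedMonoid (K := K) ht
  have hA := adicFiltration_antitone (K := K) ht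
  have hsδ : ∀ i, t ^ j₀ ∣ (s + δ) i := fun i =>
    dvd_add (hs i) ((pow_dvd_pow t hj).trans (hδ i))
  have hdiff : ∀ σ, substPoint P (s + δ) σ - substPoint P s σ
      ∈ adicFiltration K t (c + j - b + b) := fun σ => by
    rw [sub_add_cancel, map_add, Pi.add_apply, add_sub_cancel_left]
    exact hB.substPoint_mem ht hδ σ
  have hNL : ∀ i, (ratEval p q (substPoint P (s + δ)) - ratEval p q (substPoint P s) -
      fun i => eval (substPoint P δ) (linPart T1 T2 i)) i
      ∈ adicFiltration K t (2 * c + 2 * c + (c + j - b + 2 * b)) := fun i => by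
    have hq := hB.eval_mem _ (hB.substPoint_mem_ball ht hj₀ hs) i
    have hq' := hB.eval_mem _ (hB.substPoint_mem_ball ht hj₀ hsδ) i
    have := div_sub_div_sub_sub_mem_graded hA (l := linPart T1 T2 i)
      (by linarith [hB.radius, hB.nonpos]) (fun d hd => hlin i d (Nat.le_of_lt_succ hd))
      (fun d => (hB.coeff_mem i d).2.2) (fun d => (hB.coeff_mem i d).2.1)
      (hB.substPoint_mem_ball ht hj₀ hs) (hB.substPoint_mem_ball ht hj₀ hsδ) hdiff
      hq.1 hq'.1 hq.2 hq'.2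
    rwa [← eval_sub_linPart, ← map_sub, add_sub_cancel_left] at this
  exact hA (by linarith [hB.radius]) (hB.symm_mem _ _ hNL i)

end SolutionBounds

end RationalMap

section Solution

variable {R K : Type*} [CommRing R] [IsDomain R] [IsDiscreteValuationRing R] [Field K]
  [Algebra R K] [IsFractionRing R K] {t : R} (ht : Irreducible t) {n : ℕ}
  {p q : Fin n → MvPolynomial (Fin n ⊕ Fin n) K}
include ht

theorem SolutionBounds.exists (hq0 : ∀ i, eval (fun _ => 0) (q i) ≠ 0)
    (T1 T2 : (Fin n → K) ≃ₗ[K] (Fin n → K)) (P : Matrix (Fin n) (Fin n) K) :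
    ∃ b c, SolutionBounds t p q T1 T2 P b c := by
  obtain ⟨c, hc, hcoeff, hP, hT2, hq⟩ := ((eventually_le_atBot 0).and <|
    (eventually_all.2 fun i => ((eventually_atBot_forall_coeff_mem ht (p i)).and
      (eventually_atBot_forall_coeff_mem ht (q i))).and
      (eventually_atBot_forall_coeff_mem ht (p i - linPart T1 T2 i * q i))).and <|
    (eventually_atBot_forall_mulVec_mem ht P).and <|
    (eventually_atBot_forall_mulVec_mem ht (LinearMap.toMatrix' T2.symm.toLinearMap)).and <|
    eventually_all.2 fun i => eventually_atBot_eventually_atTop_eval_inv_mem ht (hq0 i)).exists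
  obtain ⟨b, hqb, hb⟩ := ((eventually_all.2 hq).and (eventually_ge_atTop (1 - 6 * c))).exists
  exact ⟨b, c, hc, hb, fun i d => ⟨(hcoeff i).1.1 d, (hcoeff i).1.2 d, (hcoeff i).2 d⟩, hP,
    fun k x hx i => by simpa using hT2 k x hx i, fun z hz i => hqb i z hz⟩

theorem exists_approx_inverse (F1 : Subfield K)
    (hdense : ∀ a : K, ∀ m : ℕ, ∃ b ∈ F1, ∃ r : R, a - b = algebraMap R K (t ^ m * r))
    (T1 T2 : (Fin n → K) ≃ₗ[K] (Fin n → K)) :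
    ∃ P : Matrix (Fin n) (Fin n) K, (∀ i j, P i j ∈ F1) ∧ ∀ (k : ℤ) (x : Fin n → K),
      (∀ j, x j ∈ adicFiltration K t k) →
        ∀ i, x i - T2.symm (T1 (P *ᵥ x)) i ∈ adicFiltration K t (k + 1) := by
  have := adicFiltration_gradedMonoid (K := K) ht.ne_zero
  have hA := adicFiltration_antitone (K := K) ht.ne_zero
  set S := LinearMap.toMatrix' (T2.trans T1.symm).toLinearMap
  set M := LinearMap.toMatrix' (T1.trans T2.symm).toLinearMap
  obtain ⟨cM, hcM⟩ := (eventually_atBot_forall_mulVec_mem ht M).exists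
  choose P hPF1 r hr using fun i j => hdense (S i j) (1 - cM).toNat
  refine ⟨Matrix.of P, hPF1, fun k x hx i => ?_⟩
  have hSP : ∀ i j, (S - Matrix.of P) i j ∈ adicFiltration K t (1 - cM).toNat := fun i j =>
    mem_adicFiltration_natCast.2 ⟨r i j, hr i j⟩
  have hM : ∀ y, M *ᵥ y = T2.symm (T1 y) := fun y => LinearMap.toMatrix'_mulVec _ y
  have hS : S *ᵥ x = T1.symm (T2 x) := LinearMap.toMatrix'_mulVec _ x
  have : x i - T2.symm (T1 (Matrix.of P *ᵥ x)) i = (M *ᵥ ((S - Matrix.of P) *ᵥ x)) i := by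
    rw [Matrix.sub_mulVec, hM, hS, map_sub, T1.apply_symm_apply, map_sub, T2.symm_apply_apply,
      Pi.sub_apply]
  rw [this]
  exact hA (by omega) (hcM _ _ (mulVec_mem_graded hSP hx) i)

theorem exists_solution {T1 T2 : (Fin n → K) ≃ₗ[K] (Fin n → K)}
    (hlin : ∀ i, ∀ d : (Fin n ⊕ Fin n) →₀ ℕ, (d.sum fun _ e => e) ≤ 1 →
      coeff d (p i - linPart T1 T2 i * q i) = 0)
    {P : Matrix (Fin n) (Fin n) K} {b c : ℤ} (hB : SolutionBounds t p q T1 T2 P b c)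
    {V W : AddSubgroup R} (hV : IsAdicCompleteSubgroup t V) (hW : IsAdicCompleteSubgroup t W)
    (htV : ∀ x ∈ V, t * x ∈ V) (htW : ∀ x ∈ W, t * x ∈ W)
    (hVW : ∀ x : R, ∃ v ∈ V, ∃ w ∈ W, x = v + w)
    (hP : ∀ (k : ℤ) (x : Fin n → K), (∀ j, x j ∈ adicFiltration K t k) →
      ∀ i, x i - T2.symm (T1 (P *ᵥ x)) i ∈ adicFiltration K t (k + 1)) :
    ∃ m : ℕ, ∀ a : Fin n → K, (∀ i, a i ∈ adicFiltration K t m) →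
      ∃ s : Fin n ⊕ Fin n → R, (∀ i, s (.inl i) ∈ V) ∧ (∀ i, s (.inr i) ∈ W) ∧
        ∀ i, eval (substPoint P s) (q i) ≠ 0 ∧
          eval (substPoint P s) (p i) = a i * eval (substPoint P s) (q i) := by
  have hA := adicFiltration_antitone (K := K) ht.ne_zero
  have hj₀ : b ≤ c + (b - c).toNat := by omega
  have hf0 : ratEval p q (substPoint P (0 : Fin n ⊕ Fin n → R)) = 0 := funext fun i => by
    have h := hlin i 0 (by simp)
    have hL : constantCoeff (linPart T1 T2 i) = 0 := by simp [linPart, constantCoeff_X]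
    rw [← constantCoeff_eq, map_sub, map_mul, hL, zero_mul, sub_zero] at h
    rw [ratEval, map_zero, eval_zero, h, zero_div, Pi.zero_apply]
  refine ⟨(b - 2 * c).toNat, fun a ha => ?_⟩
  obtain ⟨s, hsU, hs, hE⟩ := exists_eq_zero_of_improving_step ht
    (U := Sum.elim (fun _ => V) (fun _ => W)) (by rintro (i | i); exacts [hV, hW])
    (by rintro (i | i); exacts [htV, htW])
    (E := fun s => T2.symm (a - ratEval p q (substPoint P s))) (C := 6 * c - b)
    (fun i => by
      rw [hf0, sub_zero]
      exact hA (by have := hB.nonpos; have := hB.radius; omega) (hB.symm_mem _ a ha i))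
    (fun j hj s hs hE => exists_residual_step hVW hP a hE fun δ hδ =>
      hB.nonlinear_mem ht.ne_zero hlin hj₀ hj hs hδ)
    (fun j s s' hs hs' hss' => hB.residual_sub_mem ht.ne_zero hj₀ a hs hs' hss')
  have hq := hB.eval_mem _ (hB.substPoint_mem_ball ht.ne_zero hj₀ hs)
  refine ⟨s, fun i => hsU (.inl i), fun i => hsU (.inr i), fun i => ⟨(hq i).1, ?_⟩⟩
  have := congrFun (T2.symm.injective (hE.trans (map_zero _).symm)) i
  rw [Pi.sub_apply, Pi.zero_apply, sub_eq_zero, ratEval, eq_div_iff (hq i).1] at this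
  exact this.symm

end Solution

theorem stmt_1_general
    -- R̂₀ is a complete discrete valuation ring with uniformizer t,
    (R0 : Type*) [CommRing R0] [IsDomain R0] [IsDiscreteValuationRing R0]
    (t : R0) (ht : Irreducible t)
    -- containing a subring T which is a complete discrete valuation ring
    -- with the same uniformizer t.
    (T : Subring R0) (htT : t ∈ T)
    -- F₁, F₂ are subfields of the fraction field F₀ of R̂₀ containing T
    (F1 F2 : Subfield (FractionRing R0))
    -- V ⊆ F₁ ∩ R̂₀ and W ⊆ F₂ ∩ R̂₀ are t-adically complete T-submodules
    (V W : AddSubgroup R0)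
    (hVT : ∀ c : R0, c ∈ T → ∀ x ∈ V, c * x ∈ V)
    (hWT : ∀ c : R0, c ∈ T → ∀ x ∈ W, c * x ∈ W)
    (hVF1 : ∀ x ∈ V, algebraMap R0 (FractionRing R0) x ∈ F1)
    (hWF2 : ∀ x ∈ W, algebraMap R0 (FractionRing R0) x ∈ F2)
    (hVcompl : ∀ s : ℕ → R0, (∀ n, s n ∈ V) →
      (∀ n, ∃ r ∈ V, s (n + 1) - s n = t ^ n * r) →
      ∃ l ∈ V, ∀ n, ∃ r ∈ V, l - s n = t ^ n * r)
    (hWcompl : ∀ s : ℕ → R0, (∀ n, s n ∈ W) →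
      (∀ n, ∃ r ∈ W, s (n + 1) - s n = t ^ n * r) →
      ∃ l ∈ W, ∀ n, ∃ r ∈ W, l - s n = t ^ n * r)
    -- satisfying V + W = R̂₀,
    (hVW : ∀ a : R0, ∃ x ∈ V, ∃ z ∈ W, a = x + z)
    -- and F₁ is t-adically dense in F₀.
    (hdense : ∀ a : FractionRing R0, ∀ m : ℕ, ∃ b ∈ F1, ∃ r : R0,
      a - b = algebraMap R0 (FractionRing R0) (t ^ m * r))
    -- f = (f₁,…,fₙ) = (p₁/q₁,…,pₙ/qₙ) is a rational map 𝔸ⁿ × 𝔸ⁿ ⇢ 𝔸ⁿ over F₀,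
    (n : ℕ) (p q : Fin n → MvPolynomial (Fin n ⊕ Fin n) (FractionRing R0))
    -- defined at the origin,
    (hq0 : ∀ i, eval (fun _ => (0 : FractionRing R0)) (q i) ≠ 0)
    -- with expansion fᵢ = T_{1,i}(x) + T_{2,i}(y) + (terms of total degree ≥ 2)
    -- where T₁ and T₂ are automorphisms of the vector space F₀ⁿ:
    (T1 T2 : (Fin n → FractionRing R0) ≃ₗ[FractionRing R0] (Fin n → FractionRing R0))
    (hlin : ∀ i, ∀ d : (Fin n ⊕ Fin n) →₀ ℕ, (d.sum fun _ e => e) ≤ 1 →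
      coeff d (p i - linPart T1 T2 i * q i) = 0) :
    -- Then for all a ∈ 𝔸ⁿ(F₀) of sufficiently small norm (i.e. a ∈ (tᵐ R̂₀)ⁿ for
    -- suitable m), there are v ∈ F₁ⁿ and w ∈ F₂ⁿ with (v,w) in the domain of f
    -- and f(v,w) = a.
    ∃ m : ℕ, ∀ a : Fin n → FractionRing R0,
      (∀ i, ∃ r : R0, a i = algebraMap R0 (FractionRing R0) (t ^ m * r)) →
      ∃ vv ww : Fin n → FractionRing R0,
        (∀ j, vv j ∈ F1) ∧ (∀ j, ww j ∈ F2) ∧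
        (∀ i, eval (Sum.elim vv ww) (q i) ≠ 0) ∧
        (∀ i, eval (Sum.elim vv ww) (p i) = a i * eval (Sum.elim vv ww) (q i)) := by
  obtain ⟨P, hPF1, hP⟩ := exists_approx_inverse ht F1 hdense T1 T2
  obtain ⟨b, c, hB⟩ := SolutionBounds.exists ht hq0 T1 T2 P
  obtain ⟨m, hm⟩ := exists_solution ht hlin hB hVcompl hWcompl (hVT t htT) (hWT t htT) hVW hP
  refine ⟨m, fun a ha => ?_⟩
  obtain ⟨s, hsV, hsW, hs⟩ := hm a fun i => mem_adicFiltration_natCast.2 (ha i)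
  refine ⟨P *ᵥ fun i => algebraMap R0 _ (s (.inl i)), fun i => algebraMap R0 _ (s (.inr i)),
    fun i => ?_, fun i => hWF2 _ (hsW i), fun i => (hs i).1, fun i => (hs i).2⟩
  simp only [Matrix.mulVec, dotProduct]
  exact sum_mem fun j _ => mul_mem (hPF1 i j) (hVF1 _ (hsV j))

theorem stmt_1
    -- R̂₀ is a complete discrete valuation ring with uniformizer t,
    (R0 : Type*) [CommRing R0] [IsDomain R0] [IsDiscreteValuationRing R0]
    [IsAdicComplete (IsLocalRing.maximalIdeal R0) R0]
    (t : R0) (ht : Irreducible t)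
    -- containing a subring T which is a complete discrete valuation ring
    -- with the same uniformizer t.
    (T : Subring R0) (htT : t ∈ T) [IsDiscreteValuationRing T]
    [IsAdicComplete (IsLocalRing.maximalIdeal T) T]
    (htTirr : Irreducible (⟨t, htT⟩ : T))
    -- F₁, F₂ are subfields of the fraction field F₀ of R̂₀ containing T
    (F1 F2 : Subfield (FractionRing R0))
    (hTF1 : ∀ r : R0, r ∈ T → algebraMap R0 (FractionRing R0) r ∈ F1)
    (hTF2 : ∀ r : R0, r ∈ T → algebraMap R0 (FractionRing R0) r ∈ F2)
    -- V ⊆ F₁ ∩ R̂₀ and W ⊆ F₂ ∩ R̂₀ are t-adically complete T-submodules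
    (V W : AddSubgroup R0)
    (hVT : ∀ c : R0, c ∈ T → ∀ x ∈ V, c * x ∈ V)
    (hWT : ∀ c : R0, c ∈ T → ∀ x ∈ W, c * x ∈ W)
    (hVF1 : ∀ x ∈ V, algebraMap R0 (FractionRing R0) x ∈ F1)
    (hWF2 : ∀ x ∈ W, algebraMap R0 (FractionRing R0) x ∈ F2)
    (hVcompl : ∀ s : ℕ → R0, (∀ n, s n ∈ V) →
      (∀ n, ∃ r ∈ V, s (n + 1) - s n = t ^ n * r) →
      ∃ l ∈ V, ∀ n, ∃ r ∈ V, l - s n = t ^ n * r)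
    (hWcompl : ∀ s : ℕ → R0, (∀ n, s n ∈ W) →
      (∀ n, ∃ r ∈ W, s (n + 1) - s n = t ^ n * r) →
      ∃ l ∈ W, ∀ n, ∃ r ∈ W, l - s n = t ^ n * r)
    -- satisfying V + W = R̂₀,
    (hVW : ∀ a : R0, ∃ x ∈ V, ∃ z ∈ W, a = x + z)
    -- and F₁ is t-adically dense in F₀.
    (hdense : ∀ a : FractionRing R0, ∀ m : ℕ, ∃ b ∈ F1, ∃ r : R0,
      a - b = algebraMap R0 (FractionRing R0) (t ^ m * r))
    -- f = (f₁,…,fₙ) = (p₁/q₁,…,pₙ/qₙ) is a rational map 𝔸ⁿ × 𝔸ⁿ ⇢ 𝔸ⁿ over F₀,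
    (n : ℕ) (p q : Fin n → MvPolynomial (Fin n ⊕ Fin n) (FractionRing R0))
    -- defined at the origin,
    (hq0 : ∀ i, eval (fun _ => (0 : FractionRing R0)) (q i) ≠ 0)
    -- with expansion fᵢ = T_{1,i}(x) + T_{2,i}(y) + (terms of total degree ≥ 2)
    -- where T₁ and T₂ are automorphisms of the vector space F₀ⁿ:
    (T1 T2 : (Fin n → FractionRing R0) ≃ₗ[FractionRing R0] (Fin n → FractionRing R0))
    (hlin : ∀ i, ∀ d : (Fin n ⊕ Fin n) →₀ ℕ, (d.sum fun _ e => e) ≤ 1 →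
      coeff d (p i - linPart T1 T2 i * q i) = 0) :
    -- Then for all a ∈ 𝔸ⁿ(F₀) of sufficiently small norm (i.e. a ∈ (tᵐ R̂₀)ⁿ for
    -- suitable m), there are v ∈ F₁ⁿ and w ∈ F₂ⁿ with (v,w) in the domain of f
    -- and f(v,w) = a.
    ∃ m : ℕ, ∀ a : Fin n → FractionRing R0,
      (∀ i, ∃ r : R0, a i = algebraMap R0 (FractionRing R0) (t ^ m * r)) →
      ∃ vv ww : Fin n → FractionRing R0,
        (∀ j, vv j ∈ F1) ∧ (∀ j, ww j ∈ F2) ∧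
        (∀ i, eval (Sum.elim vv ww) (q i) ≠ 0) ∧
        (∀ i, eval (Sum.elim vv ww) (p i) = a i * eval (Sum.elim vv ww) (q i)) :=
  stmt_1_general R0 t ht T htT F1 F2 V W hVT hWT hVF1 hWF2 hVcompl hWcompl hVW hdense n p q hq0 T1
    T2 hlin
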